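/- Let 5/8 ≤ α ≤ 2/3 and 0 ≤ d ≤ 5α − 3. Then the optimized symmetric Han–Kobayashi multiplexing gain satisfies r_HK(α,d) = α − d, and this value is attained at the power split v = α, i.e. r(α) = α − d. -/

import Mathlib

/-- The no-outage triangle `S_d = {(x,y) : x ≥ 0, y ≥ 0, x + y ≤ d}`. -/
def Sd (d : ℝ) : Set (ℝ × ℝ) := {p : ℝ × ℝ | 0 ≤ p.1 ∧ 0 ≤ p.2 ∧ p.1 + p.2 ≤ d}

/-- Compound constraint `a₁(v) = inf_{(x,y)∈S_d} (1 - x - v - (α - v - y)⁺)⁺`. -/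
noncomputable def a1 (α d v : ℝ) : ℝ :=
  sInf {z : ℝ | ∃ p ∈ Sd d, z = max (1 - p.1 - v - max (α - v - p.2) 0) 0}

/-- Compound constraint `a₂(v) = inf_{(x,y)∈S_d} (1 - x - (α - v - y)⁺)⁺`. -/
noncomputable def a2 (α d v : ℝ) : ℝ :=
  sInf {z : ℝ | ∃ p ∈ Sd d, z = max (1 - p.1 - max (α - v - p.2) 0) 0}

/-- Compound constraint `a₃(v) = inf_{(x,y)∈S_d} (max(1 - x - v, α - y) - (α - v - y)⁺)⁺`. -/
noncomputable def a3 (α d v : ℝ) : ℝ :=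
  sInf {z : ℝ | ∃ p ∈ Sd d, z = max (max (1 - p.1 - v) (α - p.2) - max (α - v - p.2) 0) 0}

/-- Compound constraint `a₄(v) = inf_{(x,y)∈S_d} (max(1 - x, α - y) - (α - v - y)⁺)⁺`. -/
noncomputable def a4 (α d v : ℝ) : ℝ :=
  sInf {z : ℝ | ∃ p ∈ Sd d, z = max (max (1 - p.1) (α - p.2) - max (α - v - p.2) 0) 0}

/-- Symmetric Han–Kobayashi multiplexing gain with power split `v`:
`r(v) = min{a₂, (a₁+a₄)/2, a₃, (a₁+a₃+a₄)/3}`. -/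
noncomputable def rHKsplit (α d v : ℝ) : ℝ :=
  min (a2 α d v)
    (min ((a1 α d v + a4 α d v) / 2)
      (min (a3 α d v) ((a1 α d v + a3 α d v + a4 α d v) / 3)))

/-- Optimized symmetric Han–Kobayashi multiplexing gain `r_HK(α,d) = sup_{v ≥ 0} r(v)`. -/
noncomputable def rHK (α d : ℝ) : ℝ := sSup {z : ℝ | ∃ v : ℝ, 0 ≤ v ∧ z = rHKsplit α d v}

/-!
At `v = α` the interference term `(α - v - y)⁺` vanishes on `S_d`, so `a₁ ≥ 1 - α - d`,
`a₂, a₄ ≥ 1 - d` and `a₃ ≥ α - d`, with equality for `a₃` at the corner `(0, d)`; since `α ≤ 2/3`,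
the binding term of `r(α)` is `a₃`.

Conversely every `r(v)` is at most `α - d`: evaluate `a₃` at the corner `(0, d)` when `v` is large
or `d ≤ α - 1/2`, `a₂` at `(d, 0)` when `v ≤ 2α - 1`, and in the remaining window
`2α - 1 ≤ v ≤ 1 - α + d` bound the average `(a₁ + a₃ + a₄)/3`, taking `a₁, a₄` at `(d, 0)` and
`a₃` either at `(d, 0)` or at the point of the edge `x + y = d` where the two branches of its
`max` balance. The hypotheses `5/8 ≤ α` and `d ≤ 5α - 3` are what this last estimate needs.
-/

section PosPartInf

variable {X : Type*} {S : Set X} (f : X → ℝ)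

theorem sInf_posPart_le {p : X} (hp : p ∈ S) {t : ℝ} (hpt : f p ≤ t) (ht : 0 ≤ t) :
    sInf {z | ∃ q ∈ S, z = max (f q) 0} ≤ t := by
  refine le_trans (csInf_le ?_ ?_) (max_le hpt ht)
  · exact ⟨0, by rintro _ ⟨q, -, rfl⟩; exact le_max_right _ _⟩
  · exact ⟨p, hp, rfl⟩

theorem le_sInf_posPart (hS : S.Nonempty) {c : ℝ} (h : ∀ q ∈ S, c ≤ f q) :
    c ≤ sInf {z | ∃ q ∈ S, z = max (f q) 0} := by
  obtain ⟨p, hp⟩ := hS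
  refine le_csInf ?_ ?_
  · exact ⟨_, p, hp, rfl⟩
  · rintro _ ⟨q, hq, rfl⟩
    exact (h q hq).trans (le_max_left _ _)

end PosPartInf

section Constraints

variable {α d v : ℝ}

theorem mem_Sd {x y : ℝ} : (x, y) ∈ Sd d ↔ 0 ≤ x ∧ 0 ≤ y ∧ x + y ≤ d := Iff.rfl

theorem left_mem_Sd (hd : 0 ≤ d) : (d, 0) ∈ Sd d := mem_Sd.2 ⟨hd, le_rfl, by simp⟩

theorem right_mem_Sd (hd : 0 ≤ d) : (0, d) ∈ Sd d := mem_Sd.2 ⟨le_rfl, hd, by simp⟩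

theorem Sd_nonempty (hd : 0 ≤ d) : (Sd d).Nonempty := ⟨_, left_mem_Sd hd⟩

theorem a1_le_of_mem {x y t : ℝ} (hxy : (x, y) ∈ Sd d)
    (h : 1 - x - v - max (α - v - y) 0 ≤ t) (ht : 0 ≤ t) : a1 α d v ≤ t :=
  sInf_posPart_le _ hxy h ht

theorem a2_le_of_mem {x y t : ℝ} (hxy : (x, y) ∈ Sd d)
    (h : 1 - x - max (α - v - y) 0 ≤ t) (ht : 0 ≤ t) : a2 α d v ≤ t :=
  sInf_posPart_le _ hxy h ht

theorem a3_le_of_mem {x y t : ℝ} (hxy : (x, y) ∈ Sd d)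
    (h : max (1 - x - v) (α - y) - max (α - v - y) 0 ≤ t) (ht : 0 ≤ t) : a3 α d v ≤ t :=
  sInf_posPart_le _ hxy h ht

theorem a4_le_of_mem {x y t : ℝ} (hxy : (x, y) ∈ Sd d)
    (h : max (1 - x) (α - y) - max (α - v - y) 0 ≤ t) (ht : 0 ≤ t) : a4 α d v ≤ t :=
  sInf_posPart_le _ hxy h ht

theorem le_a1_self (hd : 0 ≤ d) : 1 - α - d ≤ a1 α d α := by
  refine le_sInf_posPart _ (Sd_nonempty hd) ?_
  rintro ⟨x, y⟩ ⟨hx, hy, hxy⟩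
  rw [max_eq_right (by linarith : α - α - y ≤ 0)]
  linarith

theorem le_a2_self (hd : 0 ≤ d) : 1 - d ≤ a2 α d α := by
  refine le_sInf_posPart _ (Sd_nonempty hd) ?_
  rintro ⟨x, y⟩ ⟨hx, hy, hxy⟩
  rw [max_eq_right (by linarith : α - α - y ≤ 0)]
  linarith

theorem le_a3_self (hd : 0 ≤ d) : α - d ≤ a3 α d α := by
  refine le_sInf_posPart _ (Sd_nonempty hd) ?_
  rintro ⟨x, y⟩ ⟨hx, hy, hxy⟩
  rw [max_eq_right (by linarith : α - α - y ≤ 0)]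
  have := le_max_right (1 - x - α) (α - y)
  linarith

theorem le_a4_self (hd : 0 ≤ d) : 1 - d ≤ a4 α d α := by
  refine le_sInf_posPart _ (Sd_nonempty hd) ?_
  rintro ⟨x, y⟩ ⟨hx, hy, hxy⟩
  rw [max_eq_right (by linarith : α - α - y ≤ 0)]
  have := le_max_left (1 - x) (α - y)
  linarith

theorem a3_le_sub (hd : 0 ≤ d) (hdα : d ≤ α) (h : 2 * d ≤ 2 * α - 1 ∨ 1 - α + d ≤ v) :
    a3 α d v ≤ α - d := by
  refine a3_le_of_mem (right_mem_Sd hd) ?_ (by linarith)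
  have := le_max_left (α - v - d) 0
  have := le_max_right (α - v - d) 0
  rw [sub_le_iff_le_add]
  refine max_le ?_ (by linarith)
  rcases h with h | h <;> linarith

theorem a2_le_sub (hd : 0 ≤ d) (hdα : d ≤ α) (hv : v ≤ 2 * α - 1) : a2 α d v ≤ α - d := by
  refine a2_le_of_mem (left_mem_Sd hd) ?_ (by linarith)
  have := le_max_left (α - v - 0) 0
  linarith

theorem a1_le_one_sub_sub (hd : 0 ≤ d) (hdα : d ≤ 1 - α) : a1 α d v ≤ 1 - α - d := by
  refine a1_le_of_mem (left_mem_Sd hd) ?_ (by linarith)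
  have := le_max_left (α - v - 0) 0
  linarith

theorem a4_le_one_sub_sub_add (hd : 0 ≤ d) (hdα : d ≤ 1 - α) (hv₀ : 0 ≤ v) (hv : v ≤ α) :
    a4 α d v ≤ 1 - α - d + v := by
  refine a4_le_of_mem (left_mem_Sd hd) ?_ (by linarith)
  rw [max_eq_left (by linarith : α - 0 ≤ 1 - d), max_eq_left (by linarith : 0 ≤ α - v - 0)]
  linarith

theorem a3_le_max (hd : 0 ≤ d) (hdα : d ≤ 1 - α) (hv : v ≤ α) :
    a3 α d v ≤ max (1 - α - d) v := by
  refine a3_le_of_mem (left_mem_Sd hd) ?_ ((by linarith : (0 : ℝ) ≤ 1 - α - d).trans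
    (le_max_left _ _))
  rw [max_eq_left (by linarith : 0 ≤ α - v - 0), sub_le_iff_le_add]
  have := le_max_left (1 - α - d) v
  have := le_max_right (1 - α - d) v
  exact max_le (by linarith) (by linarith)

-- the point of the edge `x + y = d` where `1 - x - v = α - y`
theorem a3_le_half (hdα : d ≤ α) (hv : (1 + α - d) / 3 ≤ v) (hy : 0 ≤ α - 1 + d + v)
    (hyd : α - 1 + v ≤ d) : a3 α d v ≤ (1 + α - d - v) / 2 := by
  have hmem : ((1 - α + d - v) / 2, (α - 1 + d + v) / 2) ∈ Sd d :=
    mem_Sd.2 ⟨by linarith, by linarith, by linarith⟩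
  refine a3_le_of_mem hmem ?_ (by linarith)
  rw [max_eq_right (by linarith : α - v - (α - 1 + d + v) / 2 ≤ 0), sub_zero]
  exact max_le (by linarith) (by linarith)

theorem a1_add_a3_add_a4_le (hα : 5 / 8 ≤ α) (hα' : α ≤ 2 / 3) (hd : α - 1 / 2 ≤ d)
    (hd' : d ≤ 5 * α - 3) (hv : 2 * α - 1 ≤ v) (hv' : v ≤ 1 - α + d) :
    a1 α d v + a3 α d v + a4 α d v ≤ 3 * (α - d) := by
  have h1 := a1_le_one_sub_sub (α := α) (d := d) (v := v) (by linarith) (by linarith)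
  have h4 := a4_le_one_sub_sub_add (α := α) (d := d) (v := v) (by linarith) (by linarith)
    (by linarith) (by linarith)
  rcases le_total v ((1 + α - d) / 3) with hv₃ | hv₃
  · have h3 := a3_le_max (α := α) (d := d) (v := v) (by linarith) (by linarith) (by linarith)
    rcases max_cases (1 - α - d) v with ⟨h, -⟩ | ⟨h, -⟩ <;> rw [h] at h3 <;> linarith
  · have h3 := a3_le_half (by linarith) hv₃ (by linarith) (by linarith)
    linarith

end Constraints

section Gain

variable {α d v : ℝ}

theorem rHKsplit_le_a3 : rHKsplit α d v ≤ a3 α d v :=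
  (min_le_right _ _).trans ((min_le_right _ _).trans (min_le_left _ _))

theorem rHKsplit_le_avg : rHKsplit α d v ≤ (a1 α d v + a3 α d v + a4 α d v) / 3 :=
  (min_le_right _ _).trans ((min_le_right _ _).trans (min_le_right _ _))

theorem rHKsplit_self (hα : α ≤ 2 / 3) (hd : 0 ≤ d) (hdα : d ≤ 2 * α - 1) :
    rHKsplit α d α = α - d := by
  refine le_antisymm (rHKsplit_le_a3.trans (a3_le_sub hd (by linarith) (.inr (by linarith)))) ?_
  have h1 := le_a1_self (α := α) hd
  have h2 := le_a2_self (α := α) hd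
  have h3 := le_a3_self (α := α) hd
  have h4 := le_a4_self (α := α) hd
  refine le_min ?_ (le_min ?_ (le_min ?_ ?_)) <;> linarith

theorem rHKsplit_le_sub (hα : 5 / 8 ≤ α) (hα' : α ≤ 2 / 3) (hd : 0 ≤ d) (hd' : d ≤ 5 * α - 3) :
    rHKsplit α d v ≤ α - d := by
  by_cases h3 : 2 * d ≤ 2 * α - 1 ∨ 1 - α + d ≤ v
  · exact rHKsplit_le_a3.trans (a3_le_sub hd (by linarith) h3)
  simp only [not_or, not_le] at h3
  rcases le_total v (2 * α - 1) with h2 | h2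
  · exact (min_le_left _ _).trans (a2_le_sub hd (by linarith) h2)
  · have := a1_add_a3_add_a4_le hα hα' (by linarith) hd' h2 h3.2.le
    exact rHKsplit_le_avg.trans (by linarith)

end Gain

/-- For `5/8 ≤ α ≤ 2/3` and `0 ≤ d ≤ 5α - 3`,
`r_HK(α,d) = α - d`, attained at the power split `v = α`. -/
theorem stmt_7 (α d : ℝ) (hα₁ : 5/8 ≤ α) (hα₂ : α ≤ 2/3)
    (hd₁ : 0 ≤ d) (hd₂ : d ≤ 5*α - 3) :
    rHK α d = α - d ∧ rHKsplit α d α = α - d := by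
  have hself : rHKsplit α d α = α - d := rHKsplit_self hα₂ hd₁ (by linarith)
  refine ⟨IsGreatest.csSup_eq ⟨⟨α, by linarith, hself.symm⟩, ?_⟩, hself⟩
  rintro _ ⟨v, -, rfl⟩
  exact rHKsplit_le_sub hα₁ hα₂ hd₁ hd₂
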